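/- arXiv:2412.20827 — 2 statements merged into one kernel-verified Lean document; each statement's English description precedes it below -/
import Mathlib

section
/- Assume A₄ = E₁⊥⁺AE₂⊥⁺ᵀ is invertible and set Ā = A₁ − A₂A₄⁻¹A₃. Then for every λ ∈ ℂ, det(L)·det(A − λE)·det(R) = det(Ā − λI_r)·det(A₄) (with real matrices regarded as complex). Consequently the pair {E, A} is regular, the polynomial λ ↦ det(A − λE) has degree exactly r, and the set of λ ∈ ℂ with det(A − λE) = 0 (the finite spectrum of the pencil A − λE) coincides with the set of eigenvalues of Ā. -/
open Matrix Polynomial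

noncomputable def pinv {m p : Type*} [Fintype m] [Fintype p] [DecidableEq p]
    (M : Matrix m p ℝ) : Matrix p m ℝ :=
  (Mᵀ * M)⁻¹ * Mᵀ

section helpers
variable {m p q : Type*}

lemma mapC_mul [Fintype p] (M : Matrix m p ℝ) (N : Matrix p q ℝ) :
    (M * N).map (fun a : ℝ => (a : ℂ)) =
      M.map (fun a : ℝ => (a : ℂ)) * N.map (fun a : ℝ => (a : ℂ)) :=
  Matrix.map_mul (f := Complex.ofRealHom)

lemma mapC_sub (M N : Matrix m p ℝ) :
    (M - N).map (fun a : ℝ => (a : ℂ)) =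
      M.map (fun a : ℝ => (a : ℂ)) - N.map (fun a : ℝ => (a : ℂ)) := by
  ext i j; simp

lemma mapC_one [Fintype m] [DecidableEq m] :
    (1 : Matrix m m ℝ).map (fun a : ℝ => (a : ℂ)) = 1 :=
  Matrix.map_one _ Complex.ofReal_zero Complex.ofReal_one

lemma mapC_zero : (0 : Matrix m p ℝ).map (fun a : ℝ => (a : ℂ)) = 0 :=
  Matrix.map_zero _ Complex.ofReal_zero

lemma mapC_det [Fintype m] [DecidableEq m] (M : Matrix m m ℝ) :
    (M.map (fun a : ℝ => (a : ℂ))).det = ((M.det : ℝ) : ℂ) := by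
  rw [show (fun a : ℝ => (a : ℂ)) = ⇑Complex.ofRealHom from rfl,
    ← RingHom.mapMatrix_apply, ← RingHom.map_det]
  rfl

lemma pinv_mul_self {k : Type*} [Fintype m] [Fintype k] [DecidableEq k]
    (F : Matrix m k ℝ) (h : IsUnit (Fᵀ * F).det) : pinv F * F = 1 := by
  rw [pinv, Matrix.mul_assoc, Matrix.nonsing_inv_mul _ h]

lemma pinv_mul_orth {k l : Type*} [Fintype m] [Fintype k] [DecidableEq k]
    (F : Matrix m k ℝ) (G : Matrix m l ℝ) (h : Fᵀ * G = 0) : pinv F * G = 0 := by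
  rw [pinv, Matrix.mul_assoc, h, Matrix.mul_zero]

end helpers

/-- `det L · det(A − λE) · det R = det(Ā − λI) · det A₄` over ℂ; hence the
pair `{E,A}` is regular, `λ ↦ det(A − λE)` has degree exactly `r`, and the finite spectrum
of the pencil coincides with the set of eigenvalues of `Ā`. -/
theorem stmt3 (n r : ℕ) (hr : 0 < r) (hrn : r < n)
    (E : Matrix (Fin n) (Fin n) ℝ)
    (E₁ E₂ : Matrix (Fin n) (Fin r) ℝ)
    (E₁b E₂b : Matrix (Fin n) (Fin (n - r)) ℝ)
    (hErank : E.rank = r)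
    (hskel : E = E₁ * E₂ᵀ)
    (hE₁rank : E₁.rank = r) (hE₂rank : E₂.rank = r)
    (horth₁ : E₁ᵀ * E₁b = 0) (horth₂ : E₂ᵀ * E₂b = 0)
    (hinv₁ : ∃ M : Matrix (Fin r ⊕ Fin (n - r)) (Fin n) ℝ,
      fromCols E₁ E₁b * M = 1 ∧ M * fromCols E₁ E₁b = 1)
    (hinv₂ : ∃ M : Matrix (Fin r ⊕ Fin (n - r)) (Fin n) ℝ,
      fromCols E₂ E₂b * M = 1 ∧ M * fromCols E₂ E₂b = 1)
    (A : Matrix (Fin n) (Fin n) ℝ)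
    (L : Matrix (Fin r ⊕ Fin (n - r)) (Fin n) ℝ)
    (R : Matrix (Fin n) (Fin r ⊕ Fin (n - r)) ℝ)
    (hL : L = fromRows (pinv E₁) (pinv E₁b))
    (hR : R = fromCols (pinv E₂)ᵀ (pinv E₂b)ᵀ)
    (A₁ : Matrix (Fin r) (Fin r) ℝ) (A₂ : Matrix (Fin r) (Fin (n - r)) ℝ)
    (A₃ : Matrix (Fin (n - r)) (Fin r) ℝ) (A₄ : Matrix (Fin (n - r)) (Fin (n - r)) ℝ)
    (hA₁ : A₁ = pinv E₁ * A * (pinv E₂)ᵀ) (hA₂ : A₂ = pinv E₁ * A * (pinv E₂b)ᵀ)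
    (hA₃ : A₃ = pinv E₁b * A * (pinv E₂)ᵀ) (hA₄ : A₄ = pinv E₁b * A * (pinv E₂b)ᵀ)
    (hA₄inv : IsUnit A₄.det)
    (Abar : Matrix (Fin r) (Fin r) ℝ) (hAbar : Abar = A₁ - A₂ * A₄⁻¹ * A₃)
    (e : Fin r ⊕ Fin (n - r) ≃ Fin n)
    (he : e = finSumFinEquiv.trans (finCongr (Nat.add_sub_cancel' hrn.le))) :
    (∀ lam : ℂ,
      ((L.submatrix e.symm id).map (fun a : ℝ => (a : ℂ))).det *
          ((A.map (fun a : ℝ => (a : ℂ))) - lam • (E.map (fun a : ℝ => (a : ℂ)))).det *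
          ((R.submatrix id e.symm).map (fun a : ℝ => (a : ℂ))).det =
        ((Abar.map (fun a : ℝ => (a : ℂ))) - lam • (1 : Matrix (Fin r) (Fin r) ℂ)).det *
          (A₄.map (fun a : ℝ => (a : ℂ))).det) ∧
    (∃ lam : ℂ,
      ((A.map (fun a : ℝ => (a : ℂ))) - lam • (E.map (fun a : ℝ => (a : ℂ)))).det ≠ 0) ∧
    ((A.map (fun a : ℝ => Polynomial.C (a : ℂ)) -
        (Polynomial.X : Polynomial ℂ) • E.map (fun a : ℝ => Polynomial.C (a : ℂ))).det.degree = (r : ℕ)) ∧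
    ({lam : ℂ |
        ((A.map (fun a : ℝ => (a : ℂ))) - lam • (E.map (fun a : ℝ => (a : ℂ)))).det = 0} =
      {lam : ℂ |
        ((Abar.map (fun a : ℝ => (a : ℂ))) - lam • (1 : Matrix (Fin r) (Fin r) ℂ)).det = 0}) := by
  clear hErank hE₁rank hE₂rank he
  obtain ⟨M₁, hFM₁, hMF₁⟩ := hinv₁
  obtain ⟨M₂, hFM₂, hMF₂⟩ := hinv₂
  set c : ℝ → ℂ := fun a => (a : ℂ) with hc
  -- step 1: invertibility of the Gram matrices
  have hid : (id : Fin n → Fin n) = ⇑(Equiv.refl (Fin n)) := rfl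
  have gram : ∀ (F : Matrix (Fin n) (Fin r) ℝ) (Fb : Matrix (Fin n) (Fin (n - r)) ℝ)
      (M : Matrix (Fin r ⊕ Fin (n - r)) (Fin n) ℝ),
      Fᵀ * Fb = 0 → fromCols F Fb * M = 1 →
      IsUnit (Fᵀ * F).det ∧ IsUnit (Fbᵀ * Fb).det := by
    intro F Fb M horth h1
    set G := fromCols F Fb with hG
    have hsub : G.submatrix id ⇑e.symm * M.submatrix ⇑e.symm id = 1 := by
      rw [submatrix_mul_equiv, h1, hid, submatrix_one_equiv]
    have hdetG : IsUnit (G.submatrix id ⇑e.symm).det := by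
      apply IsUnit.of_mul_eq_one (M.submatrix ⇑e.symm id).det
      rw [← det_mul, hsub, det_one]
    have hGtG : Gᵀ * G = fromBlocks (Fᵀ * F) 0 0 (Fbᵀ * Fb) := by
      rw [hG, transpose_fromCols, fromRows_mul_fromCols, horth]
      rw [show Fbᵀ * F = (Fᵀ * Fb)ᵀ by rw [transpose_mul, transpose_transpose], horth,
        transpose_zero]
    have hdet2 : IsUnit (Gᵀ * G).det := by
      have h3 : (Gᵀ * G).det = ((Gᵀ * G).submatrix ⇑e.symm ⇑e.symm).det :=
        (det_submatrix_equiv_self e.symm _).symm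
      have h4 : Gᵀ.submatrix ⇑e.symm ⇑(Equiv.refl (Fin n)) *
          G.submatrix ⇑(Equiv.refl (Fin n)) ⇑e.symm = (Gᵀ * G).submatrix ⇑e.symm ⇑e.symm :=
        submatrix_mul_equiv _ _ _ _ _
      rw [h3, ← h4, det_mul]
      have h5 : Gᵀ.submatrix ⇑e.symm ⇑(Equiv.refl (Fin n)) = (G.submatrix id ⇑e.symm)ᵀ := by
        rw [transpose_submatrix]; rfl
      have h6 : G.submatrix ⇑(Equiv.refl (Fin n)) ⇑e.symm = G.submatrix id ⇑e.symm := rfl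
      rw [h5, h6, det_transpose]
      exact hdetG.mul hdetG
    rw [hGtG, det_fromBlocks_zero₂₁] at hdet2
    exact ⟨isUnit_of_mul_isUnit_left hdet2, isUnit_of_mul_isUnit_right hdet2⟩
  obtain ⟨hG₁, hG₁b⟩ := gram E₁ E₁b M₁ horth₁ hFM₁
  obtain ⟨hG₂, hG₂b⟩ := gram E₂ E₂b M₂ horth₂ hFM₂
  -- basic pinv identities
  have horth₁' : E₁bᵀ * E₁ = 0 := by
    rw [show E₁bᵀ * E₁ = (E₁ᵀ * E₁b)ᵀ by rw [transpose_mul, transpose_transpose], horth₁,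
      transpose_zero]
  have horth₂' : E₂bᵀ * E₂ = 0 := by
    rw [show E₂bᵀ * E₂ = (E₂ᵀ * E₂b)ᵀ by rw [transpose_mul, transpose_transpose], horth₂,
      transpose_zero]
  -- real-level block identities
  have hLAR : L * A * R = fromBlocks A₁ A₂ A₃ A₄ := by
    rw [hL, hR, hA₁, hA₂, hA₃, hA₄, fromRows_mul, fromRows_mul_fromCols]
  have hLE₁ : L * E₁ = fromRows 1 0 := by
    rw [hL, fromRows_mul, pinv_mul_self E₁ hG₁, pinv_mul_orth E₁b E₁ horth₁']
  have hE₂R : E₂ᵀ * R = fromCols 1 0 := by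
    rw [hR, mul_fromCols,
      show E₂ᵀ * (pinv E₂)ᵀ = (pinv E₂ * E₂)ᵀ by rw [transpose_mul],
      show E₂ᵀ * (pinv E₂b)ᵀ = (pinv E₂b * E₂)ᵀ by rw [transpose_mul],
      pinv_mul_self E₂ hG₂, pinv_mul_orth E₂b E₂ horth₂', transpose_one, transpose_zero]
  have hLER : L * E * R = fromBlocks 1 0 0 0 := by
    rw [hskel, ← Matrix.mul_assoc L E₁ E₂ᵀ, Matrix.mul_assoc (L * E₁) E₂ᵀ R, hLE₁, hE₂R,
      fromRows_mul_fromCols]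
    simp
  -- complex level
  have key : ∀ lam : ℂ,
      (L.map c) * ((A.map c) - lam • (E.map c)) * (R.map c) =
        fromBlocks ((A₁.map c) - lam • 1) (A₂.map c) (A₃.map c) (A₄.map c) := by
    intro lam
    have h1 : (L.map c) * (A.map c) * (R.map c)
        = fromBlocks (A₁.map c) (A₂.map c) (A₃.map c) (A₄.map c) := by
      rw [hc, ← mapC_mul, ← mapC_mul, hLAR, fromBlocks_map]
    have h2 : (L.map c) * (E.map c) * (R.map c) = fromBlocks 1 0 0 0 := by
      rw [hc, ← mapC_mul, ← mapC_mul, hLER, fromBlocks_map]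
      rw [mapC_one, mapC_zero, mapC_zero, mapC_zero]
    have h3 : (L.map c) * ((A.map c) - lam • (E.map c)) * (R.map c)
        = (L.map c) * (A.map c) * (R.map c) - lam • ((L.map c) * (E.map c) * (R.map c)) := by
      rw [Matrix.mul_sub, Matrix.mul_smul, Matrix.sub_mul, Matrix.smul_mul]
    rw [h3, h1, h2]
    ext (i | i) (j | j) <;>
      simp [Matrix.sub_apply, Matrix.smul_apply]
  have hA4c : IsUnit ((A₄.map c).det) := by
    rw [hc, mapC_det]; exact hA₄inv.map Complex.ofRealHom
  have hinvmap : (A₄.map c)⁻¹ = (A₄⁻¹).map c := by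
    apply inv_eq_right_inv
    rw [hc, ← mapC_mul, Matrix.mul_nonsing_inv _ hA₄inv, mapC_one]
  have keydet : ∀ lam : ℂ,
      ((L.map c) * ((A.map c) - lam • (E.map c)) * (R.map c)).det =
        ((Abar.map c) - lam • 1).det * (A₄.map c).det := by
    intro lam
    haveI : Invertible (A₄.map c) := (A₄.map c).invertibleOfIsUnitDet hA4c
    rw [key lam, det_fromBlocks₂₂, invOf_eq_nonsing_inv, hinvmap, mul_comm]
    congr 2
    rw [hAbar, hc, mapC_sub, mapC_mul, mapC_mul, sub_right_comm]
  have detfact : ∀ lam : ℂ,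
      ((L.submatrix ⇑e.symm id).map c).det *
        ((A.map c) - lam • (E.map c)).det *
        ((R.submatrix id ⇑e.symm).map c).det =
      ((L.map c) * ((A.map c) - lam • (E.map c)) * (R.map c)).det := by
    intro lam
    set D := (A.map c) - lam • (E.map c) with hD
    rw [← submatrix_map, ← submatrix_map]
    have step1 : (L.map c).submatrix ⇑e.symm id * D = ((L.map c) * D).submatrix ⇑e.symm id := by
      conv_lhs => rw [← Matrix.submatrix_id_id D]
      rw [hid, submatrix_mul_equiv]
    have step2 : ((L.map c) * D).submatrix ⇑e.symm id * (R.map c).submatrix id ⇑e.symm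
        = ((L.map c) * D * (R.map c)).submatrix ⇑e.symm ⇑e.symm := by
      rw [hid, submatrix_mul_equiv]
    rw [← det_mul, ← det_mul, step1, step2, det_submatrix_equiv_self]
  have part1 : ∀ lam : ℂ,
      ((L.submatrix ⇑e.symm id).map c).det * ((A.map c) - lam • (E.map c)).det *
          ((R.submatrix id ⇑e.symm).map c).det =
        ((Abar.map c) - lam • 1).det * (A₄.map c).det := by
    intro lam; rw [detfact lam, keydet lam]
  -- nonvanishing of the three constants
  have hLF : L * fromCols E₁ E₁b = 1 := by
    rw [hL, fromRows_mul_fromCols, pinv_mul_self E₁ hG₁, pinv_mul_self E₁b hG₁b,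
      pinv_mul_orth E₁ E₁b horth₁, pinv_mul_orth E₁b E₁ horth₁', fromBlocks_one]
  have hl0 : ((L.submatrix ⇑e.symm id).map c).det ≠ 0 := by
    have h1 : (L.map c) * ((fromCols E₁ E₁b).map c) = 1 := by
      rw [hc, ← mapC_mul, hLF, mapC_one]
    have h2 : (L.map c).submatrix ⇑e.symm id *
        ((fromCols E₁ E₁b).map c).submatrix id ⇑e.symm = 1 := by
      rw [hid, submatrix_mul_equiv, h1, submatrix_one_equiv]
    rw [← submatrix_map]
    exact (IsUnit.of_mul_eq_one _ (by rw [← det_mul, h2, det_one])).ne_zero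
  have hRt : Rᵀ = fromRows (pinv E₂) (pinv E₂b) := by
    rw [hR, transpose_fromCols, transpose_transpose, transpose_transpose]
  have hRF : Rᵀ * fromCols E₂ E₂b = 1 := by
    rw [hRt, fromRows_mul_fromCols, pinv_mul_self E₂ hG₂, pinv_mul_self E₂b hG₂b,
      pinv_mul_orth E₂ E₂b horth₂, pinv_mul_orth E₂b E₂ horth₂', fromBlocks_one]
  have hr0 : ((R.submatrix id ⇑e.symm).map c).det ≠ 0 := by
    have htr : ((R.submatrix id ⇑e.symm).map c)ᵀ = (Rᵀ.submatrix ⇑e.symm id).map c := by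
      ext i j; simp [Matrix.transpose_apply, Matrix.map_apply, Matrix.submatrix_apply]
    rw [← det_transpose, htr]
    have h1 : (Rᵀ.map c) * ((fromCols E₂ E₂b).map c) = 1 := by
      rw [hc, ← mapC_mul, hRF, mapC_one]
    have h2 : (Rᵀ.map c).submatrix ⇑e.symm id *
        ((fromCols E₂ E₂b).map c).submatrix id ⇑e.symm = 1 := by
      rw [hid, submatrix_mul_equiv, h1, submatrix_one_equiv]
    rw [← submatrix_map]
    exact (IsUnit.of_mul_eq_one _ (by rw [← det_mul, h2, det_one])).ne_zero
  have hd0 : (A₄.map c).det ≠ 0 := hA4c.ne_zero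
  -- polynomial considerations
  set B := Abar.map c with hB
  set P : Polynomial ℂ := (A.map (fun a : ℝ => Polynomial.C ((a : ℂ))) -
      (X : ℂ[X]) • E.map (fun a : ℝ => Polynomial.C ((a : ℂ)))).det with hP
  have hPe : ∀ lam : ℂ, P.eval lam = ((A.map c) - lam • (E.map c)).det := by
    intro lam
    have hmape : ((A.map fun a : ℝ => Polynomial.C ((a : ℂ))) -
        (X : ℂ[X]) • E.map (fun a : ℝ => Polynomial.C ((a : ℂ)))).map (eval lam)
        = (A.map c) - lam • (E.map c) := by
      ext i j
      simp only [Matrix.sub_apply, Matrix.smul_apply, Matrix.map_apply, eval_sub, eval_mul,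
        eval_C, eval_X, smul_eq_mul, hc]
    rw [show (eval lam : ℂ[X] → ℂ) = ⇑(evalRingHom lam) from (coe_evalRingHom lam).symm] at hmape
    rw [hP, ← hmape, ← RingHom.mapMatrix_apply, ← RingHom.map_det]
    rfl
  set Q : Polynomial ℂ := (B.map (fun z : ℂ => Polynomial.C z) -
      (X : ℂ[X]) • (1 : Matrix (Fin r) (Fin r) (ℂ[X]))).det with hQ
  have hQe : ∀ lam : ℂ, Q.eval lam = (B - lam • 1).det := by
    intro lam
    have hmape : (B.map (fun z : ℂ => Polynomial.C z) -
        (X : ℂ[X]) • (1 : Matrix (Fin r) (Fin r) (ℂ[X]))).map (eval lam) = B - lam • 1 := by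
      ext i j
      by_cases hij : i = j <;>
        simp [Matrix.sub_apply, Matrix.smul_apply, Matrix.map_apply, Matrix.one_apply,
          smul_eq_mul, hij]
    rw [show (eval lam : ℂ[X] → ℂ) = ⇑(evalRingHom lam) from (coe_evalRingHom lam).symm] at hmape
    rw [hQ, ← hmape]
    exact RingHom.map_det (evalRingHom lam) _
  have hQc : Q = (-1 : ℂ[X]) ^ r * B.charpoly := by
    have hneg : B.map (fun z : ℂ => Polynomial.C z) -
        (X : ℂ[X]) • (1 : Matrix (Fin r) (Fin r) (ℂ[X])) = -(charmatrix B) := by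
      ext i j
      by_cases hij : i = j
      · subst hij
        simp [Matrix.sub_apply, Matrix.smul_apply, Matrix.one_apply, Matrix.neg_apply,
          charmatrix_apply_eq]
        try ring
      · simp [Matrix.sub_apply, Matrix.smul_apply, Matrix.one_apply, Matrix.neg_apply,
          hij]
    rw [hQ, hneg, det_neg, Fintype.card_fin]
    rfl
  have hQdeg : Q.degree = (r : ℕ) := by
    rw [hQc, degree_mul, Matrix.charpoly_degree_eq_dim, Fintype.card_fin]
    have : ((-1 : ℂ[X]) ^ r).degree = 0 := by
      rw [degree_pow, degree_neg, degree_one]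
      simp
    rw [this, zero_add]
  have hpoly : Polynomial.C ((L.submatrix ⇑e.symm id).map c).det * P *
      Polynomial.C ((R.submatrix id ⇑e.symm).map c).det =
      Q * Polynomial.C ((A₄.map c).det) := by
    apply Polynomial.funext
    intro x
    simp only [eval_mul, eval_C]
    rw [hPe x, hQe x, hB]
    exact part1 x
  have hdeg : P.degree = (r : ℕ) := by
    have h1 := congrArg Polynomial.degree hpoly
    rw [degree_mul, degree_mul, degree_mul, degree_C hl0, degree_C hr0, degree_C hd0, hQdeg] at h1
    simpa using h1
  have hPne : P ≠ 0 := by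
    intro h
    rw [h, degree_zero] at hdeg
    exact absurd hdeg (by simp)
  have part2 : ∃ lam : ℂ, ((A.map c) - lam • (E.map c)).det ≠ 0 := by
    by_contra h
    push_neg at h
    apply hPne
    apply Polynomial.funext
    intro x
    rw [hPe x, eval_zero]
    exact h x
  have part4 : {lam : ℂ | ((A.map c) - lam • (E.map c)).det = 0} =
      {lam : ℂ | ((Abar.map c) - lam • (1 : Matrix (Fin r) (Fin r) ℂ)).det = 0} := by
    ext x
    simp only [Set.mem_setOf_eq]
    constructor
    · intro hx
      have h := part1 x
      rw [hx, mul_zero, zero_mul] at h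
      rcases mul_eq_zero.mp h.symm with h' | h'
      · exact h'
      · exact absurd h' hd0
    · intro hx
      have h := part1 x
      rw [hx, zero_mul] at h
      rcases mul_eq_zero.mp h with h' | h'
      · rcases mul_eq_zero.mp h' with h'' | h''
        · exact absurd h'' hl0
        · exact h''
      · exact absurd h' hr0
  exact ⟨part1, part2, hdeg, part4⟩
end

section
/- Let X, Y ∈ ℝ^{r×r} be symmetric positive definite, let γ > 0 and let p be a natural number. There exist matrices X₁ ∈ ℝ^{p×r}, X₂ ∈ ℝ^{p×p}, Y₁ ∈ ℝ^{p×r}, Y₂ ∈ ℝ^{p×p} such that the block matrices X̂ = [[X, X₁ᵀ],[X₁, X₂]] and Ŷ = [[Y, Y₁ᵀ],[Y₁, Y₂]] are positive definite and X̂Ŷ = γ²I_{r+p}, if and only if the 2r×2r block matrix W = [[X, γI_r],[γI_r, Y]] is positive semidefinite and rank W ≤ r + p. -/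
open Matrix

set_option linter.unusedSectionVars false
set_option maxHeartbeats 1600000

section Helpers

variable {m n : Type*} [Fintype m] [Fintype n] [DecidableEq m] [DecidableEq n]

lemma conjT_eq_transpose' {α β : Type*} (B : Matrix α β ℝ) : Bᴴ = Bᵀ := by
  ext i j; simp [conjTranspose_apply]

lemma posDef_smul' {M : Matrix n n ℝ} (hM : M.PosDef) {c : ℝ} (hc : 0 < c) :
    (c • M).PosDef := by
  refine posDef_iff_dotProduct_mulVec.mpr ⟨by unfold Matrix.IsHermitian; rw [conjTranspose_smul, hM.1.eq]; simp,
    fun x hx => ?_⟩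
  rw [smul_mulVec, dotProduct_smul]
  exact mul_pos hc (hM.dotProduct_mulVec_pos hx)

lemma posDef_conj' {A : Matrix n n ℝ} (hA : A.PosDef) (B : Matrix n n ℝ) (hB : IsUnit B.det) :
    (Bᴴ * A * B).PosDef := by
  refine posDef_iff_dotProduct_mulVec.mpr ⟨isHermitian_conjTranspose_mul_mul B hA.1, fun x hx => ?_⟩
  have hBx : B *ᵥ x ≠ 0 := by
    have := Matrix.mulVec_injective_iff_isUnit.mpr (isUnit_iff_isUnit_det _ |>.2 hB)
    intro h
    exact hx (this (by simpa using h))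
  simpa only [star_mulVec, dotProduct_mulVec, vecMul_vecMul] using hA.dotProduct_mulVec_pos hBx

lemma posDef_fromBlocks_diag' {A : Matrix m m ℝ} {D : Matrix n n ℝ}
    (hA : A.PosDef) (hD : D.PosDef) : (fromBlocks A 0 0 D).PosDef := by
  refine posDef_iff_dotProduct_mulVec.mpr ⟨?_, ?_⟩
  · unfold Matrix.IsHermitian
    rw [fromBlocks_conjTranspose, hA.1.eq, hD.1.eq]
    simp
  · intro x hx
    rw [fromBlocks_mulVec, dotProduct_block]
    simp only [Matrix.zero_mulVec, add_zero, zero_add, Sum.elim_comp_inl, Sum.elim_comp_inr]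
    rcases (by
      by_contra h
      push_neg at h
      apply hx
      funext i
      cases i with
      | inl i => exact congrFun h.1 i
      | inr i => exact congrFun h.2 i : x ∘ Sum.inl ≠ 0 ∨ x ∘ Sum.inr ≠ 0) with h | h
    · have h1 := hA.dotProduct_mulVec_pos h
      have h2 := hD.posSemidef.dotProduct_mulVec_nonneg (x ∘ Sum.inr)
      calc (0:ℝ) < _ := lt_add_of_lt_of_nonneg h1 h2
        _ = _ := by rfl
    · have h1 := hA.posSemidef.dotProduct_mulVec_nonneg (x ∘ Sum.inl)
      have h2 := hD.dotProduct_mulVec_pos h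
      exact add_pos_of_nonneg_of_pos h1 h2

lemma posDef_toBlocks₂₂' {A : Matrix m m ℝ} {B : Matrix m n ℝ} {C : Matrix n m ℝ}
    {D : Matrix n n ℝ} (h : (fromBlocks A B C D).PosDef) : D.PosDef := by
  refine posDef_iff_dotProduct_mulVec.mpr ⟨?_, ?_⟩
  · ext i j
    simpa [conjTranspose_apply] using congrFun (congrFun h.1.eq (Sum.inr i)) (Sum.inr j)
  · intro x hx
    have hv : (Sum.elim 0 x : m ⊕ n → ℝ) ≠ 0 := by
      intro hv
      exact hx (funext fun i => congrFun hv (Sum.inr i))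
    have := h.dotProduct_mulVec_pos hv
    rw [fromBlocks_mulVec, dotProduct_block] at this
    simpa using this

lemma rank_fromBlocks_diag' (A : Matrix m m ℝ) (D : Matrix n n ℝ) (hA : IsUnit A.det) :
    (fromBlocks A 0 0 D).rank = Fintype.card m + D.rank := by
  classical
  have hAinj : Function.Injective (A.mulVec) :=
    Matrix.mulVec_injective_iff_isUnit.mpr (isUnit_iff_isUnit_det _ |>.2 hA)
  have hker : ∀ x : m ⊕ n → ℝ, (fromBlocks A 0 0 D) *ᵥ x = 0 ↔
      (x ∘ Sum.inl = 0 ∧ D *ᵥ (x ∘ Sum.inr) = 0) := by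
    intro x
    rw [fromBlocks_mulVec]
    simp only [Matrix.zero_mulVec, add_zero, zero_add]
    constructor
    · intro h
      have h1 : A *ᵥ (x ∘ Sum.inl) = 0 := funext fun i => congrFun h (Sum.inl i)
      have h2 : D *ᵥ (x ∘ Sum.inr) = 0 := funext fun i => congrFun h (Sum.inr i)
      exact ⟨hAinj (by simpa using h1), h2⟩
    · rintro ⟨h1, h2⟩
      funext i
      cases i with
      | inl i => simp [h1]
      | inr i => exact congrFun h2 i
  let e : LinearMap.ker (fromBlocks A 0 0 D).mulVecLin ≃ₗ[ℝ] LinearMap.ker D.mulVecLin :=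
    { toFun := fun x => ⟨x.1 ∘ Sum.inr, ((hker x.1).mp x.2).2⟩
      map_add' := fun x y => rfl
      map_smul' := fun c x => rfl
      invFun := fun y => ⟨Sum.elim 0 y.1, by
        show (fromBlocks A 0 0 D) *ᵥ _ = 0
        rw [hker]
        exact ⟨rfl, y.2⟩⟩
      left_inv := fun x => by
        apply Subtype.ext
        funext i
        cases i with
        | inl i => exact (congrFun ((hker x.1).mp x.2).1 i).symm
        | inr i => rfl
      right_inv := fun y => rfl }
  have h1 := LinearMap.finrank_range_add_finrank_ker ((fromBlocks A 0 0 D).mulVecLin)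
  have h2 := LinearMap.finrank_range_add_finrank_ker (D.mulVecLin)
  have h3 := e.finrank_eq
  rw [Module.finrank_pi, Fintype.card_sum] at h1
  rw [Module.finrank_pi] at h2
  simp only [Matrix.rank]
  omega

lemma exists_factor' {r p : ℕ} (S : Matrix (Fin r) (Fin r) ℝ) (hS : S.PosSemidef)
    (h : S.rank ≤ p) : ∃ X₁ : Matrix (Fin p) (Fin r) ℝ, S = X₁ᵀ * X₁ := by
  classical
  have hH := hS.1
  set lam := hH.eigenvalues with hlam
  set V : Matrix (Fin r) (Fin r) ℝ := (hH.eigenvectorUnitary : Matrix (Fin r) (Fin r) ℝ) with hV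
  have hspec : S = V * diagonal lam * star V := by
    simpa using hH.spectral_theorem
  set M : Matrix (Fin r) (Fin r) ℝ := diagonal (fun i => Real.sqrt (lam i)) * star V with hM
  have hMt : Mᵀ = V * diagonal (fun i => Real.sqrt (lam i)) := by
    rw [hM, transpose_mul, ← conjT_eq_transpose' (star V), star_eq_conjTranspose,
      conjTranspose_conjTranspose, diagonal_transpose]
  have hfun : (fun i => Real.sqrt (lam i) * Real.sqrt (lam i)) = lam :=
    funext fun i => Real.mul_self_sqrt (hS.eigenvalues_nonneg i)
  have hMM : Mᵀ * M = S := by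
    rw [hMt, hM, Matrix.mul_assoc, ← Matrix.mul_assoc (diagonal _), diagonal_mul_diagonal,
      hfun, ← Matrix.mul_assoc, ← hspec]
  have hcard : Fintype.card {i // lam i ≠ 0} ≤ p := by
    rw [hlam, ← hH.rank_eq_card_non_zero_eigs]
    exact h
  obtain ⟨f⟩ : Nonempty ({i // lam i ≠ 0} ↪ Fin p) :=
    Function.Embedding.nonempty_of_card_le (by simpa using hcard)
  set E : Matrix (Fin p) (Fin r) ℝ :=
    Matrix.of (fun j i => if h : lam i ≠ 0 then (if f ⟨i, h⟩ = j then (1:ℝ) else 0) else 0) with hE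
  have hEE : Eᵀ * E = diagonal (fun i => if lam i ≠ 0 then (1:ℝ) else 0) := by
    ext i i'
    rw [Matrix.mul_apply]
    simp only [transpose_apply, hE, Matrix.of_apply, diagonal_apply]
    by_cases hi : lam i ≠ 0
    · by_cases hi' : lam i' ≠ 0
      · simp only [dif_pos hi, dif_pos hi', ite_mul, one_mul, zero_mul]
        rw [Finset.sum_ite_eq]
        simp only [Finset.mem_univ, if_true]
        by_cases hii : i = i'
        · subst hii
          simp [hi]
        · have hne : f ⟨i', hi'⟩ ≠ f ⟨i, hi⟩ := fun hc =>
            hii (congrArg Subtype.val (f.injective hc)).symm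
          simp [hne, hii]
      · push_neg at hi'
        have hii : i ≠ i' := fun hc => (by rw [hc] at hi; exact hi hi')
        simp [dif_neg (not_not_intro hi'), hii]
    · push_neg at hi
      simp [dif_neg (not_not_intro hi), hi]
  have hDM : diagonal (fun i => if lam i ≠ 0 then (1:ℝ) else 0) * M = M := by
    have hfun2 : (fun i => (if lam i ≠ 0 then (1:ℝ) else 0) * Real.sqrt (lam i)) =
        fun i => Real.sqrt (lam i) := by
      funext i
      by_cases hi : lam i ≠ 0
      · simp [hi]
      · push_neg at hi
        simp [hi]
    rw [hM, ← Matrix.mul_assoc, diagonal_mul_diagonal, hfun2]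
  refine ⟨E * M, ?_⟩
  rw [transpose_mul, Matrix.mul_assoc, ← Matrix.mul_assoc Eᵀ, hEE, hDM, hMM]

end Helpers

/-- Lemma on block completion: there exist `X₁, X₂, Y₁, Y₂` making
`X̂ = [[X, X₁ᵀ],[X₁, X₂]] > 0`, `Ŷ = [[Y, Y₁ᵀ],[Y₁, Y₂]] > 0` with `X̂Ŷ = γ²I`
iff `W = [[X, γI],[γI, Y]] ≥ 0` and `rank W ≤ r + p`. -/
theorem stmt11 (r p : ℕ)
    (X Y : Matrix (Fin r) (Fin r) ℝ)
    (hXsymm : X.IsSymm) (hYsymm : Y.IsSymm)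
    (hX : X.PosDef) (hY : Y.PosDef)
    (γ : ℝ) (hγ : 0 < γ) :
    (∃ (X₁ : Matrix (Fin p) (Fin r) ℝ) (X₂ : Matrix (Fin p) (Fin p) ℝ)
        (Y₁ : Matrix (Fin p) (Fin r) ℝ) (Y₂ : Matrix (Fin p) (Fin p) ℝ),
      (fromBlocks X X₁ᵀ X₁ X₂).PosDef ∧ (fromBlocks Y Y₁ᵀ Y₁ Y₂).PosDef ∧
      fromBlocks X X₁ᵀ X₁ X₂ * fromBlocks Y Y₁ᵀ Y₁ Y₂ =
        γ ^ 2 • (1 : Matrix (Fin r ⊕ Fin p) (Fin r ⊕ Fin p) ℝ)) ↔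
    ((fromBlocks X (γ • (1 : Matrix (Fin r) (Fin r) ℝ))
        (γ • (1 : Matrix (Fin r) (Fin r) ℝ)) Y).PosSemidef ∧
      (fromBlocks X (γ • (1 : Matrix (Fin r) (Fin r) ℝ))
        (γ • (1 : Matrix (Fin r) (Fin r) ℝ)) Y).rank ≤ r + p) := by
  classical
  have hγ2 : (0:ℝ) < γ ^ 2 := pow_pos hγ 2
  have hXd : IsUnit X.det := hX.det_pos.ne'.isUnit
  have hYd : IsUnit Y.det := hY.det_pos.ne'.isUnit
  haveI : Invertible X := hX.isUnit.invertible
  haveI : Invertible Y := hY.isUnit.invertible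
  have hconj : (γ • (1 : Matrix (Fin r) (Fin r) ℝ))ᴴ = γ • 1 := by
    rw [conjTranspose_smul, conjTranspose_one]
    simp
  have hmulγ : ∀ (A : Matrix (Fin r) (Fin r) ℝ),
      (γ • (1 : Matrix (Fin r) (Fin r) ℝ)) * A * (γ • (1 : Matrix (Fin r) (Fin r) ℝ))
        = (γ ^ 2) • A := by
    intro A
    rw [smul_mul_assoc, one_mul, mul_smul_comm, mul_one, smul_smul, ← pow_two]
  -- PSD characterization
  have hWpsd_iff : (fromBlocks X (γ • (1 : Matrix (Fin r) (Fin r) ℝ))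
      (γ • (1 : Matrix (Fin r) (Fin r) ℝ)) Y).PosSemidef ↔
      (Y - (γ ^ 2) • X⁻¹).PosSemidef := by
    have h := Matrix.PosDef.fromBlocks₁₁ (γ • (1 : Matrix (Fin r) (Fin r) ℝ)) Y hX
    rw [hconj, hmulγ] at h
    exact h
  -- rank characterization
  have hone : (γ ^ 2 : ℝ) • (1 : Matrix (Fin r ⊕ Fin p) (Fin r ⊕ Fin p) ℝ) =
      fromBlocks ((γ ^ 2) • 1) 0 0 ((γ ^ 2) • 1) := by
    rw [← fromBlocks_one, fromBlocks_smul]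
    simp
  have hWrank : (fromBlocks X (γ • (1 : Matrix (Fin r) (Fin r) ℝ))
      (γ • (1 : Matrix (Fin r) (Fin r) ℝ)) Y).rank = r + (Y - (γ ^ 2) • X⁻¹).rank := by
    have hdecomp := fromBlocks_eq_of_invertible₁₁ X (γ • (1 : Matrix (Fin r) (Fin r) ℝ))
      (γ • (1 : Matrix (Fin r) (Fin r) ℝ)) Y
    rw [invOf_eq_nonsing_inv] at hdecomp
    rw [hdecomp]
    have hdetU : IsUnit (fromBlocks (1 : Matrix (Fin r) (Fin r) ℝ) 0
        ((γ • (1 : Matrix (Fin r) (Fin r) ℝ)) * X⁻¹) 1).det := by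
      rw [det_fromBlocks_zero₁₂]
      simp
    have hdetV : IsUnit (fromBlocks (1 : Matrix (Fin r) (Fin r) ℝ)
        (X⁻¹ * (γ • (1 : Matrix (Fin r) (Fin r) ℝ))) 0 1).det := by
      rw [det_fromBlocks_zero₂₁]
      simp
    rw [Matrix.rank_mul_eq_left_of_isUnit_det _ _ hdetV,
      Matrix.rank_mul_eq_right_of_isUnit_det _ _ hdetU]
    have : (γ • (1 : Matrix (Fin r) (Fin r) ℝ)) * X⁻¹ * (γ • (1 : Matrix (Fin r) (Fin r) ℝ))
        = (γ ^ 2) • X⁻¹ := hmulγ X⁻¹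
    rw [this, rank_fromBlocks_diag' X _ hXd, Fintype.card_fin]
  constructor
  · -- forward
    rintro ⟨X₁, X₂, Y₁, Y₂, hXh, hYh, hmul⟩
    rw [fromBlocks_multiply, hone, fromBlocks_inj] at hmul
    obtain ⟨e1, e2, _, _⟩ := hmul
    have hY₂ : Y₂.PosDef := posDef_toBlocks₂₂' hYh
    have hY₂d : IsUnit Y₂.det := hY₂.det_pos.ne'.isUnit
    have hX₁ : X₁ᵀ = -(X * Y₁ᵀ * Y₂⁻¹) := by
      have h5 : X₁ᵀ * Y₂ = -(X * Y₁ᵀ) := by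
        rw [eq_neg_iff_add_eq_zero, add_comm]
        exact e2
      have h6 := congrArg (fun M => M * Y₂⁻¹) h5
      simpa [Matrix.mul_assoc, Matrix.mul_nonsing_inv _ hY₂d] using h6
    have hZ : Y - (γ ^ 2) • X⁻¹ = Y₁ᵀ * Y₂⁻¹ * Y₁ := by
      have h5 : X * (Y - Y₁ᵀ * Y₂⁻¹ * Y₁) = (γ ^ 2) • 1 := by
        rw [Matrix.mul_sub]
        calc X * Y - X * (Y₁ᵀ * Y₂⁻¹ * Y₁)
            = X * Y + X₁ᵀ * Y₁ := by
              rw [hX₁]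
              simp [Matrix.mul_assoc, sub_eq_add_neg]
          _ = (γ ^ 2) • 1 := e1
      have h6 := congrArg (fun M => X⁻¹ * M) h5
      simp only [← Matrix.mul_assoc, Matrix.nonsing_inv_mul _ hXd, Matrix.one_mul,
        mul_smul_comm, Matrix.mul_one] at h6
      rw [← h6]
      abel
    have hZpsd : (Y - (γ ^ 2) • X⁻¹).PosSemidef := by
      rw [hZ, ← conjT_eq_transpose']
      exact (hY₂.inv.posSemidef).conjTranspose_mul_mul_same Y₁
    have hZrank : (Y - (γ ^ 2) • X⁻¹).rank ≤ p := by
      rw [hZ, Matrix.mul_assoc]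
      exact le_trans (Matrix.rank_mul_le_right _ _) (le_trans (Matrix.rank_mul_le_right _ _)
        (by simpa using Y₁.rank_le_card_height))
    exact ⟨hWpsd_iff.mpr hZpsd, by rw [hWrank]; omega⟩
  · -- converse
    rintro ⟨hW, hrank⟩
    have hZpsd := hWpsd_iff.mp hW
    have hZrank : (Y - (γ ^ 2) • X⁻¹).rank ≤ p := by
      rw [hWrank] at hrank
      omega
    have hSpsd : (X - (γ ^ 2) • Y⁻¹).PosSemidef := by
      have h := Matrix.PosDef.fromBlocks₂₂ X (γ • (1 : Matrix (Fin r) (Fin r) ℝ)) hY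
      rw [hconj, hmulγ] at h
      exact h.mp hW
    have hfact : X - (γ ^ 2) • Y⁻¹ = X * ((Y - (γ ^ 2) • X⁻¹) * Y⁻¹) := by
      rw [Matrix.sub_mul, Matrix.mul_nonsing_inv _ hYd, smul_mul_assoc, Matrix.mul_sub,
        Matrix.mul_one, mul_smul_comm, ← Matrix.mul_assoc, Matrix.mul_nonsing_inv _ hXd,
        Matrix.one_mul]
    have hSrank : (X - (γ ^ 2) • Y⁻¹).rank ≤ p := by
      rw [hfact]
      exact le_trans (Matrix.rank_mul_le_right _ _)
        (le_trans (Matrix.rank_mul_le_left _ _) hZrank)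
    obtain ⟨X₁, hX₁⟩ := exists_factor' _ hSpsd hSrank
    have hXX : X - X₁ᵀ * X₁ = (γ ^ 2) • Y⁻¹ := by
      rw [← hX₁]
      abel
    have hXsum : (γ ^ 2) • Y⁻¹ + X₁ᵀ * X₁ = X := by
      rw [← hXX]
      abel
    have hG : ((γ ^ 2) • Y⁻¹ : Matrix (Fin r) (Fin r) ℝ).PosDef := posDef_smul' hY.inv hγ2
    -- X̂ := fromBlocks X X₁ᵀ X₁ 1 is positive definite
    have hXhat : (fromBlocks X X₁ᵀ X₁ (1 : Matrix (Fin p) (Fin p) ℝ)).PosDef := by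
      have hdV : IsUnit (fromBlocks (1 : Matrix (Fin r) (Fin r) ℝ) 0 X₁ 1).det := by
        rw [det_fromBlocks_zero₁₂]
        simp
      have h := posDef_conj' (posDef_fromBlocks_diag' hG (Matrix.PosDef.one)) _ hdV
      have heq : (fromBlocks (1 : Matrix (Fin r) (Fin r) ℝ) 0 X₁ 1)ᴴ *
          (fromBlocks ((γ ^ 2) • Y⁻¹) 0 0 1) * (fromBlocks 1 0 X₁ 1) =
          fromBlocks X X₁ᵀ X₁ 1 := by
        rw [fromBlocks_conjTranspose, fromBlocks_multiply, fromBlocks_multiply]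
        rw [conjT_eq_transpose' X₁]
        simp [hXsum]
      rwa [heq] at h
    have hXhd : IsUnit (fromBlocks X X₁ᵀ X₁ (1 : Matrix (Fin p) (Fin p) ℝ)).det :=
      hXhat.det_pos.ne'.isUnit
    have hYt : (-(X₁ * Y))ᵀ = -(Y * X₁ᵀ) := by
      rw [transpose_neg, transpose_mul, hYsymm.eq]
    have hprod : fromBlocks X X₁ᵀ X₁ (1 : Matrix (Fin p) (Fin p) ℝ) *
        fromBlocks Y (-(X₁ * Y))ᵀ (-(X₁ * Y)) ((γ ^ 2) • 1 + X₁ * Y * X₁ᵀ) =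
        (γ ^ 2) • 1 := by
      rw [fromBlocks_multiply, hone, fromBlocks_inj]
      refine ⟨?_, ?_, ?_, ?_⟩
      · have : X * Y + X₁ᵀ * -(X₁ * Y) = (X - X₁ᵀ * X₁) * Y := by
          rw [Matrix.sub_mul, Matrix.mul_assoc]
          simp [sub_eq_add_neg]
        rw [this, hXX, Matrix.smul_mul, Matrix.nonsing_inv_mul _ hYd]
      · rw [hYt, Matrix.mul_add, Matrix.mul_smul, Matrix.mul_one]
        have h1 : X * -(Y * X₁ᵀ) = -(X * Y * X₁ᵀ) := by
          rw [Matrix.mul_neg, Matrix.mul_assoc]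
        have h2 : X₁ᵀ * (X₁ * Y * X₁ᵀ) = (X₁ᵀ * X₁) * Y * X₁ᵀ := by
          simp [Matrix.mul_assoc]
        rw [h1, h2]
        have h3 : X * Y * X₁ᵀ - (X₁ᵀ * X₁) * Y * X₁ᵀ = (γ ^ 2) • X₁ᵀ := by
          rw [← Matrix.sub_mul, ← Matrix.sub_mul, hXX, Matrix.smul_mul, Matrix.smul_mul,
            Matrix.nonsing_inv_mul _ hYd, Matrix.one_mul]
        have h4 : X * Y * X₁ᵀ = (γ ^ 2) • X₁ᵀ + (X₁ᵀ * X₁) * Y * X₁ᵀ := by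
          rw [← h3]; abel
        rw [h4]
        abel
      · simp
      · rw [hYt, Matrix.one_mul]
        have : X₁ * -(Y * X₁ᵀ) = -(X₁ * Y * X₁ᵀ) := by
          rw [Matrix.mul_neg, Matrix.mul_assoc]
        rw [this]
        abel
    have hYhat : (fromBlocks Y (-(X₁ * Y))ᵀ (-(X₁ * Y))
        ((γ ^ 2) • 1 + X₁ * Y * X₁ᵀ)).PosDef := by
      have hinv : fromBlocks Y (-(X₁ * Y))ᵀ (-(X₁ * Y)) ((γ ^ 2) • 1 + X₁ * Y * X₁ᵀ) =
          (γ ^ 2) • (fromBlocks X X₁ᵀ X₁ (1 : Matrix (Fin p) (Fin p) ℝ))⁻¹ := by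
        have h6 := congrArg
          (fun M => (fromBlocks X X₁ᵀ X₁ (1 : Matrix (Fin p) (Fin p) ℝ))⁻¹ * M) hprod
        simp only [← Matrix.mul_assoc, Matrix.nonsing_inv_mul _ hXhd, Matrix.one_mul,
          mul_smul_comm, Matrix.mul_one] at h6
        exact h6
      rw [hinv]
      exact posDef_smul' hXhat.inv hγ2
    exact ⟨X₁, 1, -(X₁ * Y), (γ ^ 2) • 1 + X₁ * Y * X₁ᵀ, hXhat, hYhat, hprod⟩
end
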